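/- In the majority protocol, every fair execution from an initial configuration reaches a point after which the number of unpaired agents is constant and all unpaired agents share a common datum: there exists τ such that #U(C_τ) = #U(C_{τ+1}) = ⋯ and for every i ≥ τ the set {d : Cᵢ(d, U) > 0} has at most one element, where U is the set of unpaired states. -/

import Mathlib

/-- A transition set: `((p,q), s, (p',q'))` where `s = true` encodes the data
comparison `=` and `s = false` encodes `≠`. -/
abbrev PTrans (Q : Type*) := Set ((Q × Q) × Bool × (Q × Q))

/-- The configuration with a single agent of datum `d` in state `q`. -/
noncomputable def sing {D Q : Type*} (d : D) (q : Q) : D →₀ (Q →₀ ℕ) :=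
  Finsupp.single d (Finsupp.single q 1)

/-- One step of a population protocol with unordered data. -/
def Step {D Q : Type*} (δ : PTrans Q) (C C' : D →₀ (Q →₀ ℕ)) : Prop :=
  ∃ (p q p' q' : Q) (s : Bool) (d e : D),
    ((p, q), s, (p', q')) ∈ δ ∧ (if s then d = e else d ≠ e) ∧
    sing d p + sing e q ≤ C ∧
    C' = C - (sing d p + sing e q) + (sing d p' + sing e q')

/-- Reachability: reflexive-transitive closure of the step relation. -/
def Reach {D Q : Type*} (δ : PTrans Q) : (D →₀ (Q →₀ ℕ)) → (D →₀ (Q →₀ ℕ)) → Prop :=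
  Relation.ReflTransGen (Step δ)

/-- The embedding order on configurations. -/
def Embeds {D Q : Type*} (C C' : D →₀ (Q →₀ ℕ)) : Prop :=
  ∃ ρ : D ↪ D, ∀ d, C d ≤ C' (ρ d)

/-- An execution of the protocol. -/
def IsExec {D Q : Type*} (δ : PTrans Q) (e : ℕ → (D →₀ (Q →₀ ℕ))) : Prop :=
  ∀ i, Step δ (e i) (e (i + 1))

/-- Fairness: any configuration reachable from infinitely many configurations of the
execution occurs infinitely often along the execution. -/
def Fair {D Q : Type*} (δ : PTrans Q) (e : ℕ → (D →₀ (Q →₀ ℕ))) : Prop :=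
  ∀ C', {i | Reach δ (e i) C'}.Infinite → {i | e i = C'}.Infinite

/-- The execution converges to the output value given by the proposition `P`
(`true` if `P` holds, `false` otherwise): from some point on, every agent's state
has that output. -/
def Converges {D Q : Type*} (O : Q → Bool) (e : ℕ → (D →₀ (Q →₀ ℕ))) (P : Prop) : Prop :=
  ∃ τ, ∀ i, τ ≤ i → ∀ d q, 0 < e i d q → (O q = true ↔ P)


/-- The majority values of the majority protocol. -/
inductive MajVal | Y | N | Ybar | Nbar | y | n
deriving DecidableEq

/-- A state of the majority protocol: the macros `pair`, `grp`, `even` and `maj`. -/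
structure MajState where
  pair : Bool
  grp : Bool
  even : Bool
  maj : MajVal
deriving DecidableEq

open MajVal in
/-- The transitions of the majority protocol: rules (1)–(14), together with the
implicit identity transitions.  The Boolean `s` in `((p,q),s,(p',q'))` is `true` for
the color precondition `d₁ = d₂` and `false` for `d₁ ≠ d₂`. -/
def MajRule : ((MajState × MajState) × Bool × (MajState × MajState)) → Prop :=
  fun t =>
  let p := t.1.1; let q := t.1.2; let s := t.2.1; let p' := t.2.2.1; let q' := t.2.2.2
  -- implicit identity transitions
  (p' = p ∧ q' = q) ∨
  -- (1) pairing
  (s = false ∧ p.pair = false ∧ q.pair = false ∧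
    p' = { p with pair := true, even := true } ∧
    q' = { q with pair := true, even := true }) ∨
  -- (2)
  (s = false ∧ p.pair = false ∧ q.pair = true ∧ q.grp = true ∧ q.maj = Y ∧
    p' = p ∧ q' = { q with grp := false, maj := N }) ∨
  -- (3)
  (s = true ∧ p.pair = false ∧ q.pair = true ∧ q.grp = false ∧ q.maj = N ∧
    p' = p ∧ q' = { q with grp := true, maj := Y }) ∨
  -- (4)
  (s = false ∧ p.pair = false ∧ q.pair = true ∧ q.grp = true ∧ (q.maj = y ∨ q.maj = n) ∧
    p' = p ∧ q' = { q with maj := Nbar }) ∨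
  -- (5)
  (s = true ∧ p.pair = false ∧ q.pair = true ∧ q.grp = false ∧ (q.maj = y ∨ q.maj = n) ∧
    p' = p ∧ q' = { q with maj := Ybar }) ∨
  -- (6)
  (p.grp = true ∧ p.maj = Nbar ∧ q.grp = false ∧ (q.maj = y ∨ q.maj = n) ∧
    p' = { p with grp := false, maj := N } ∧ q' = { q with maj := N }) ∨
  -- (7)
  (p.grp = false ∧ p.maj = Ybar ∧ q.grp = true ∧ (q.maj = y ∨ q.maj = n) ∧
    p' = { p with grp := true, maj := Y } ∧ q' = { q with maj := Y }) ∨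
  -- (8)
  (p.grp = true ∧ p.maj = Nbar ∧ q.grp = false ∧ q.maj = Ybar ∧
    p' = { p with grp := false, maj := n } ∧ q' = { q with grp := true, maj := n }) ∨
  -- (9)
  (p.pair = false ∧ q.even = true ∧ p' = p ∧ q' = { q with even := false }) ∨
  -- (10)
  (p.pair = true ∧ p.even = true ∧ q.pair = true ∧ q.even = false ∧
    p' = p ∧ q' = { q with even := true }) ∨
  -- (11)
  (p.maj = Y ∧ q.maj = N ∧ p' = { p with maj := n } ∧ q' = { q with maj := n }) ∨
  -- (12)
  (p.maj = Y ∧ q.maj = n ∧ p' = p ∧ q' = { q with maj := y }) ∨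
  -- (13)
  (p.maj = N ∧ q.maj = y ∧ p' = p ∧ q' = { q with maj := n }) ∨
  -- (14)
  (p.maj = n ∧ q.maj = y ∧ p' = p ∧ q' = { q with maj := n })

/-- The transition set of the majority protocol. -/
def majDelta : PTrans MajState := {t | MajRule t}

/-- The unique initial state of the majority protocol:
unpaired, in the majority group, even bit false, majority value `Y`. -/
def majInit : MajState := ⟨false, true, false, MajVal.Y⟩

/-- The number of agents of `C` whose state satisfies `S`. -/
noncomputable def cardB {D Q : Type*} (S : Q → Bool) (C : D →₀ (Q →₀ ℕ)) : ℕ :=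
  C.sum fun _ f => f.sum fun q c => if S q then c else 0

section Helpers
variable {D Q : Type*}

lemma cardB_add (S : Q → Bool) (C C' : D →₀ (Q →₀ ℕ)) :
    cardB S (C + C') = cardB S C + cardB S C' := by
  unfold cardB
  rw [Finsupp.sum_add_index'] <;> intro a
  · simp
  · intro b1 b2
    rw [Finsupp.sum_add_index'] <;> intro q
    · simp
    · intro c1 c2; split_ifs <;> simp

lemma cardB_sing (S : Q → Bool) (d : D) (q : Q) :
    cardB S (sing d q) = if S q then 1 else 0 := by
  unfold cardB sing
  rw [Finsupp.sum_single_index, Finsupp.sum_single_index]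
  · simp
  · simp

lemma fsub_add_cancel {x C : D →₀ (Q →₀ ℕ)} (h : x ≤ C) : C - x + x = C := by
  ext a b
  have h1 := Finsupp.le_def.mp (Finsupp.le_def.mp h a) b
  simp only [Finsupp.add_apply, Finsupp.tsub_apply]
  omega

lemma cardB_mono (S : Q → Bool) {x C : D →₀ (Q →₀ ℕ)} (h : x ≤ C) :
    cardB S x ≤ cardB S C := by
  have h3 := cardB_add S (C - x) x
  rw [fsub_add_cancel h] at h3
  omega

lemma cardB_sub_add (S : Q → Bool) {x C : D →₀ (Q →₀ ℕ)} (y : D →₀ (Q →₀ ℕ)) (h : x ≤ C) :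
    cardB S (C - x + y) = cardB S C - cardB S x + cardB S y := by
  have h3 := cardB_add S (C - x) x
  rw [fsub_add_cancel h] at h3
  rw [cardB_add]
  omega

end Helpers
instance : Fintype MajVal :=
  ⟨{MajVal.Y, MajVal.N, MajVal.Ybar, MajVal.Nbar, MajVal.y, MajVal.n}, by
    intro x; cases x <;> simp⟩

def majStateEquiv : MajState ≃ Bool × Bool × Bool × MajVal where
  toFun s := (s.pair, s.grp, s.even, s.maj)
  invFun t := ⟨t.1, t.2.1, t.2.2.1, t.2.2.2⟩
  left_inv s := rfl
  right_inv t := rfl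

instance : Fintype MajState := Fintype.ofEquiv _ majStateEquiv.symm

def wUnp (q : MajState) : ℕ := if q.pair then 0 else 1

lemma rule_weight {p q p' q' : MajState} {s : Bool}
    (h : ((p, q), s, (p', q')) ∈ majDelta) :
    wUnp p' + wUnp q' ≤ wUnp p + wUnp q := by
  simp only [majDelta, Set.mem_setOf_eq, MajRule] at h
  rcases h with ⟨rfl, rfl⟩ | ⟨-, hp, hq, rfl, rfl⟩ | ⟨-, -, -, -, -, rfl, rfl⟩ |
    ⟨-, -, -, -, -, rfl, rfl⟩ | ⟨-, -, -, -, -, rfl, rfl⟩ | ⟨-, -, -, -, -, rfl, rfl⟩ |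
    ⟨-, -, -, -, rfl, rfl⟩ | ⟨-, -, -, -, rfl, rfl⟩ | ⟨-, -, -, -, rfl, rfl⟩ |
    ⟨-, -, rfl, rfl⟩ | ⟨-, -, -, -, rfl, rfl⟩ | ⟨-, -, rfl, rfl⟩ | ⟨-, -, rfl, rfl⟩ |
    ⟨-, -, rfl, rfl⟩ | ⟨-, -, rfl, rfl⟩ <;>
  simp [wUnp, *]
section StepLemmas
variable {D Q : Type*}

lemma sing_le {C : D →₀ (Q →₀ ℕ)} {d d' : D} {p q : Q} (hdd : d ≠ d')
    (h1 : 0 < C d p) (h2 : 0 < C d' q) : sing d p + sing d' q ≤ C := by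
  classical
  rw [Finsupp.le_def]; intro a
  rw [Finsupp.le_def]; intro b
  rw [Finsupp.add_apply]
  simp only [sing, Finsupp.single_apply, Finsupp.add_apply,
    apply_ite (fun f : Q →₀ ℕ => f b), Finsupp.coe_zero, Pi.zero_apply]
  split_ifs <;> simp_all <;> omega

lemma step_support {δ : PTrans Q} {C C' : D →₀ (Q →₀ ℕ)} (h : Step δ C C') :
    C'.support ⊆ C.support := by
  obtain ⟨p, q, p', q', s, d, ee, -, -, hle, rfl⟩ := h
  intro d0 hd0
  by_contra hC
  simp only [Finsupp.mem_support_iff, not_not] at hC hd0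
  apply hd0
  have hx := Finsupp.le_def.mp hle d0
  rw [hC] at hx
  have hxd : ∀ qq, (sing d p + sing ee q) d0 qq = 0 := by
    intro qq
    have := Finsupp.le_def.mp hx qq
    simpa using this
  have hdd : d ≠ d0 := by
    rintro rfl
    have := hxd p
    simp [sing, Finsupp.add_apply, Finsupp.single_apply] at this
  have hde : ee ≠ d0 := by
    rintro rfl
    have := hxd q
    simp [sing, Finsupp.add_apply, Finsupp.single_apply] at this
  ext qq
  simp [Finsupp.add_apply, Finsupp.tsub_apply, hC, sing, Finsupp.single_apply, hdd, hde]

lemma apply_le_cardB_true (C : D →₀ (Q →₀ ℕ)) (d : D) (q : Q) :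
    C d q ≤ cardB (fun _ => true) C := by
  unfold cardB
  simp only [if_true]
  by_cases hd : d ∈ C.support
  · have h1 : C d q ≤ (C d).sum fun _ n => n := by
      by_cases hq : q ∈ (C d).support
      · exact Finset.single_le_sum (fun i _ => Nat.zero_le _) hq
      · simp [Finsupp.notMem_support_iff.mp hq]
    have h2 : (C d).sum (fun _ n => n) ≤ C.sum fun _ f => f.sum fun _ n => n :=
      Finset.single_le_sum (f := fun d => (C d).sum fun _ n => n) (fun i _ => Nat.zero_le _) hd
    exact h1.trans h2
  · simp [Finsupp.notMem_support_iff.mp hd]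

end StepLemmas

lemma cardB_sing_unp {D' : Type*} (d : D') (q : MajState) :
    cardB (fun r => !r.pair) (sing d q) = wUnp q := by
  rw [cardB_sing]; unfold wUnp; cases q.pair <;> simp

lemma step_cardB_le {D : Type*} {C C' : D →₀ (MajState →₀ ℕ)} (h : Step majDelta C C') :
    cardB (fun r => !r.pair) C' ≤ cardB (fun r => !r.pair) C := by
  obtain ⟨p, q, p', q', s, d, ee, hδ, -, hle, rfl⟩ := h
  rw [cardB_sub_add _ _ hle, cardB_add, cardB_add, cardB_sing_unp, cardB_sing_unp,
    cardB_sing_unp, cardB_sing_unp]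
  have hw := rule_weight hδ
  have hm := cardB_mono (fun r => !r.pair) hle
  rw [cardB_add, cardB_sing_unp, cardB_sing_unp] at hm
  omega

lemma step_cardB_total {D : Type*} {C C' : D →₀ (MajState →₀ ℕ)} (h : Step majDelta C C') :
    cardB (fun _ => true) C' = cardB (fun _ => true) C := by
  obtain ⟨p, q, p', q', s, d, ee, hδ, -, hle, rfl⟩ := h
  rw [cardB_sub_add _ _ hle, cardB_add, cardB_sing, cardB_sing, cardB_add, cardB_sing, cardB_sing]
  have hm := cardB_mono (fun _ => true) hle
  rw [cardB_add, cardB_sing, cardB_sing] at hm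
  simp only [if_true] at *
  omega
lemma eventually_inf {α : Type*} (e : ℕ → α) (hfin : (Set.range e).Finite) :
    ∃ τ : ℕ, ∀ i, τ ≤ i → {j | e j = e i}.Infinite := by
  classical
  set F := {C ∈ Set.range e | {j | e j = C}.Finite} with hFdef
  have hF : F.Finite := hfin.subset (fun x hx => hx.1)
  have hB : (⋃ C ∈ F, {j | e j = C}).Finite := hF.biUnion (fun C hC => hC.2)
  obtain ⟨n, hn⟩ := hB.bddAbove
  refine ⟨n + 1, fun i hi => ?_⟩
  by_contra hinf
  rw [Set.not_infinite] at hinf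
  have hmem : i ∈ ⋃ C ∈ F, {j | e j = C} :=
    Set.mem_biUnion (⟨⟨i, rfl⟩, hinf⟩ : e i ∈ F) rfl
  have := hn hmem
  omega

lemma range_finite {D : Type*} (e : ℕ → (D →₀ (MajState →₀ ℕ)))
    (hexec : IsExec majDelta e) : (Set.range e).Finite := by
  classical
  set s := (e 0).support with hs
  set N := cardB (fun _ => true) (e 0) with hN
  have hsupp : ∀ i, (e i).support ⊆ s := by
    intro i
    induction i with
    | zero => exact subset_rfl
    | succ k ih => exact (step_support (hexec k)).trans ih
  have htot : ∀ i, cardB (fun _ => true) (e i) = N := by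
    intro i
    induction i with
    | zero => rfl
    | succ k ih => rw [step_cardB_total (hexec k), ih]
  have hbound : ∀ i (d : D) (q : MajState), e i d q ≤ N := by
    intro i d q
    exact (apply_le_cardB_true (e i) d q).trans_eq (htot i)
  set F : (D →₀ (MajState →₀ ℕ)) → ((↥s × MajState) → ℕ) := fun C p => C p.1 p.2 with hFdef
  have himg : (F '' Set.range e).Finite := by
    apply Set.Finite.subset (Set.Finite.pi (fun _ : ↥s × MajState => Set.finite_Iic N))
    rintro g ⟨C, ⟨i, rfl⟩, rfl⟩
    intro p _
    exact hbound i _ _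
  have hinj : Set.InjOn F (Set.range e) := by
    rintro C ⟨i, rfl⟩ C' ⟨i', rfl⟩ hFF
    ext d q
    by_cases hd : d ∈ s
    · exact congrFun hFF (⟨d, hd⟩, q)
    · have h1 : e i d = 0 := Finsupp.notMem_support_iff.mp (fun h => hd (hsupp i h))
      have h2 : e i' d = 0 := Finsupp.notMem_support_iff.mp (fun h => hd (hsupp i' h))
      rw [h1, h2]
  exact Set.Finite.of_finite_image himg hinj

/-- In every fair execution of the majority protocol from an initial configuration,
the number of unpaired agents eventually stabilizes, and from that point on all
unpaired agents share a common datum. -/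
theorem maj_pairing_stabilizes {D : Type*} (e : ℕ → (D →₀ (MajState →₀ ℕ)))
    (h0 : ∀ d q, 0 < e 0 d q → q = majInit)
    (hexec : IsExec majDelta e) (hfair : Fair majDelta e) :
    ∃ τ, (∀ i, τ ≤ i → cardB (fun q => ! q.pair) (e i) = cardB (fun q => ! q.pair) (e τ)) ∧
      ∀ i, τ ≤ i → ∀ d d' : D,
        (∃ q : MajState, q.pair = false ∧ 0 < e i d q) →
        (∃ q : MajState, q.pair = false ∧ 0 < e i d' q) → d = d' := by
  classical
  set a : ℕ → ℕ := fun i => cardB (fun q => !q.pair) (e i) with ha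
  have hstep : ∀ i, a (i + 1) ≤ a i := fun i => step_cardB_le (hexec i)
  have hchain : ∀ i j, i ≤ j → a j ≤ a i := by
    intro i j hij
    induction hij with
    | refl => exact le_refl _
    | step _ ih => exact (hstep _).trans ih
  set m := sInf (Set.range a) with hm
  obtain ⟨τ₀, hτ₀⟩ : m ∈ Set.range a := Nat.sInf_mem ⟨a 0, 0, rfl⟩
  have hlow : ∀ i, m ≤ a i := fun i => Nat.sInf_le ⟨i, rfl⟩
  obtain ⟨τ₁, hτ₁⟩ := eventually_inf e (range_finite e hexec)
  have haconst : ∀ i, max τ₀ τ₁ ≤ i → a i = m := by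
    intro i hi
    have h1 : a i ≤ a τ₀ := hchain τ₀ i (le_trans (le_max_left _ _) hi)
    have := hlow i
    omega
  refine ⟨max τ₀ τ₁, ?_, ?_⟩
  · intro i hi
    show a i = a (max τ₀ τ₁)
    rw [haconst i hi, haconst _ (le_refl _)]
  · rintro i hi d d' ⟨q1, hq1, hc1⟩ ⟨q2, hq2, hc2⟩
    by_contra hdd
    have hrule : ((q1, q2), false,
        ({q1 with pair := true, even := true}, {q2 with pair := true, even := true})) ∈ majDelta := by
      right; left; exact ⟨rfl, hq1, hq2, rfl, rfl⟩
    have hle := sing_le hdd hc1 hc2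
    set C'' := e i - (sing d q1 + sing d' q2) +
      (sing d ({q1 with pair := true, even := true} : MajState) +
       sing d' ({q2 with pair := true, even := true} : MajState)) with hC''
    have hstep' : Step majDelta (e i) C'' :=
      ⟨q1, q2, _, _, false, d, d', hrule, by simpa using hdd, hle, rfl⟩
    have hinf : {j | Reach majDelta (e j) C''}.Infinite := by
      apply (hτ₁ i (le_trans (le_max_right _ _) hi)).mono
      intro j hj
      simp only [Set.mem_setOf_eq] at hj ⊢
      rw [hj]
      exact Relation.ReflTransGen.single hstep'
    obtain ⟨j, hj, hjlt⟩ := (hfair C'' hinf).exists_gt (max τ₀ τ₁)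
    have hcard : cardB (fun q => !q.pair) C'' = a i - 2 := by
      rw [hC'', cardB_sub_add _ _ hle, cardB_add, cardB_add, cardB_sing_unp, cardB_sing_unp,
        cardB_sing_unp, cardB_sing_unp]
      unfold wUnp
      simp [hq1, hq2]
      rfl
    have hge2 : 2 ≤ a i := by
      have h := cardB_mono (fun q => !q.pair) hle
      rw [cardB_add, cardB_sing_unp, cardB_sing_unp] at h
      unfold wUnp at h
      simp only [hq1, hq2, if_false] at h
      exact h
    have hai : a i = m := haconst i hi
    have haj : a j = m := haconst j (le_of_lt hjlt)
    have hjc : a j = a i - 2 := by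
      show cardB (fun q => !q.pair) (e j) = a i - 2
      rw [Set.mem_setOf_eq.mp hj, hcard]
    omega
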